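/- For each i ∈ {0,1,2}, the operation ⋄_i on F₃, defined by f ⋄_i g = φ_{α_i(f)}(g) · f where α_i(f) = iᵐ is the maximal all-i leaf address of the reduced domain tree of f, makes F₃ a monoid with identity the identity element of F₃. -/

import Mathlib

open Set
open scoped Classical

noncomputable section

/-- An address: a finite word in the alphabet `{0,1,2}`. -/
abbrev Address : Type := List (Fin 3)

/-- Left endpoint of the triadic interval `I_α`. -/
def addrLeft : Address → ℝ
  | [] => 0
  | i :: α => ((i : ℕ) : ℝ) / 3 + addrLeft α / 3

/-- Length of the triadic interval `I_α`. -/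
def addrLen (α : Address) : ℝ := (1 / 3 : ℝ) ^ α.length

/-- The triadic subinterval `I_α ⊆ [0,1]` determined by the address `α`. -/
def Iaddr (α : Address) : Set ℝ := Set.Icc (addrLeft α) (addrLeft α + addrLen α)

/-- The linear orientation-preserving isomorphism `ψ_α : I_α → [0,1]`. -/
def psi (α : Address) (t : ℝ) : ℝ := (t - addrLeft α) / addrLen α

/-- The inverse `ψ_α⁻¹ : [0,1] → I_α`. -/
def psiInv (α : Address) (t : ℝ) : ℝ := addrLeft α + addrLen α * t

/-- `φ_α(f)` acts as `ψ_α⁻¹ ∘ f ∘ ψ_α` on `I_α` and as the identity elsewhere. -/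
def phi (α : Address) (f : ℝ → ℝ) : ℝ → ℝ :=
  fun t => if t ∈ Iaddr α then psiInv α (f (psi α t)) else t

/-- A triadic rational. -/
def IsTriadic (q : ℝ) : Prop := ∃ a : ℤ, ∃ n : ℕ, q = (a : ℝ) / 3 ^ n

/-- Membership in the Brown–Thompson group `F₃`, realized as piecewise-linear
homeomorphisms of `[0,1]` (extended by the identity to all of `ℝ`) with breakpoints
at triadic rationals and slopes powers of `3`. The group product is `f·g = g ∘ f`. -/
def IsF3 (f : ℝ → ℝ) : Prop :=
  (∀ t, t ∉ Set.Icc (0 : ℝ) 1 → f t = t) ∧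
  Set.BijOn f (Set.Icc 0 1) (Set.Icc 0 1) ∧
  StrictMonoOn f (Set.Icc 0 1) ∧
  ∃ breaks : Finset ℝ, (∀ b ∈ breaks, IsTriadic b) ∧
    ∀ x ∈ Set.Icc (0 : ℝ) 1, x ∉ breaks →
      ∃ (k : ℤ) (c : ℝ), IsTriadic c ∧
        ∀ᶠ y in nhdsWithin x (Set.Icc 0 1), f y = (3 : ℝ) ^ k * y + c

/-- `f` maps `I_α` linearly (preserving orientation, with triadic affine data)
onto the triadic interval `I_β`. -/
def IsTriadicLinearOn (f : ℝ → ℝ) (α β : Address) : Prop :=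
  ∀ t ∈ Iaddr α, f t = psiInv β (psi α t)

/-- The depth of the maximal all-`i` leaf of the reduced domain tree of `f`:
the least `n` such that `f` maps `I_{iⁿ}` linearly onto a triadic interval. -/
def leafExp (i : Fin 3) (f : ℝ → ℝ) : ℕ :=
  sInf {n : ℕ | ∃ β : Address, IsTriadicLinearOn f (List.replicate n i) β}

/-- The address `l(f) = 1ⁿ` of the central leaf of `f` (the leaf of the reduced
domain tree whose interval contains `1/2`). -/
def centralLeaf (f : ℝ → ℝ) : Address := List.replicate (leafExp 1 f) 1

/-- The central monoid operation `f ⋄ g = φ_{l(f)}(g) · f` (recall `a·b = b ∘ a`). -/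
def diam (f g : ℝ → ℝ) : ℝ → ℝ := fun t => f (phi (centralLeaf f) g t)

/-- `f ⋄_i g = φ_{α_i(f)}(g) · f`, where `α_i(f) = iᵐ` is the maximal all-`i`
leaf address of the reduced domain tree of `f`. -/
def diamI (i : Fin 3) (f g : ℝ → ℝ) : ℝ → ℝ :=
  fun t => f (phi (List.replicate (leafExp i f) i) g t)

/-!
Since `φ_α` is multiplicative and `φ_α ∘ φ_β = φ_{αβ}`, associativity of `⋄ᵢ` reduces to the
additivity `m(f ⋄ᵢ g) = m(f) + m(g)` of the depth `m = leafExp i`. On `I_{iᵐ}` the product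
`f ⋄ᵢ g` is `ψ_β⁻¹ ∘ g ∘ ψ_{iᵐ}` when `f` maps `I_{iᵐ}` linearly onto `I_β`. Hence if `g` is
triadic linear at depth `n`, the product is at depth `m + n`; conversely, triadic linearity of
the product at depth `m + d` forces that of `g` at depth `d`, and at a depth below `m` it forces
`g = 1`.

That `m(f)` exists uses that an element of `F₃` is affine with triadic data on every small
enough triadic interval: the interior of a triadic interval of level `K` contains no triadic
number with denominator `3ᴷ`, in particular no breakpoint, and a function that is locally affine
on an interval is affine on it.
-/

open Topology

lemma addrLen_pos (α : Address) : 0 < addrLen α := by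
  unfold addrLen; positivity

lemma addrLen_eq_zpow (α : Address) : addrLen α = (3 : ℝ) ^ (-(α.length : ℤ)) := by
  rw [addrLen, zpow_neg, zpow_natCast, one_div, inv_pow]

lemma psiInv_psi (α : Address) (t : ℝ) : psiInv α (psi α t) = t := by
  unfold psiInv psi
  field_simp [(addrLen_pos α).ne']
  ring

lemma psi_psiInv (α : Address) (t : ℝ) : psi α (psiInv α t) = t := by
  unfold psiInv psi
  field_simp [(addrLen_pos α).ne']
  ring

lemma psi_nil (t : ℝ) : psi [] t = t := by
  simp [psi, addrLeft, addrLen]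

lemma Iaddr_nil : Iaddr [] = Icc 0 1 := by
  simp [Iaddr, addrLeft, addrLen]

lemma strictMono_psi (α : Address) : StrictMono (psi α) := fun _ _ h =>
  div_lt_div_of_pos_right (by linarith) (addrLen_pos α)

lemma strictMono_psiInv (α : Address) : StrictMono (psiInv α) := fun _ _ h => by
  unfold psiInv; gcongr; exact addrLen_pos α

lemma mem_Iaddr_iff {α : Address} {t : ℝ} : t ∈ Iaddr α ↔ psi α t ∈ Icc (0 : ℝ) 1 := by
  rw [Iaddr, psi, mem_Icc, mem_Icc, le_div_iff₀ (addrLen_pos α), div_le_one (addrLen_pos α)]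
  constructor <;> rintro ⟨h₁, h₂⟩ <;> constructor <;> linarith

lemma psiInv_mem_Iaddr {α : Address} {t : ℝ} (h : t ∈ Icc (0 : ℝ) 1) : psiInv α t ∈ Iaddr α := by
  rwa [mem_Iaddr_iff, psi_psiInv]

lemma addrLeft_nonneg (α : Address) : 0 ≤ addrLeft α := by
  induction α with
  | nil => rfl
  | cons d α ih => unfold addrLeft; positivity

lemma addrLeft_add_addrLen_le_one (α : Address) : addrLeft α + addrLen α ≤ 1 := by
  induction α with
  | nil => simp [addrLeft, addrLen]
  | cons d α ih =>
    have hd : ((d : ℕ) : ℝ) ≤ 2 := by exact_mod_cast Nat.le_of_lt_succ d.is_lt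
    simp only [addrLeft, addrLen, List.length_cons, pow_succ] at ih ⊢
    linarith

lemma Iaddr_subset_Icc (α : Address) : Iaddr α ⊆ Icc 0 1 := fun _ ⟨h₁, h₂⟩ =>
  ⟨(addrLeft_nonneg α).trans h₁, h₂.trans (addrLeft_add_addrLen_le_one α)⟩

lemma addrLeft_mul_pow (α : Address) : ∃ j : ℕ, addrLeft α * 3 ^ α.length = j := by
  induction α with
  | nil => exact ⟨0, by simp [addrLeft]⟩
  | cons d α ih =>
    obtain ⟨j, hj⟩ := ih
    refine ⟨d * 3 ^ α.length + j, ?_⟩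
    simp only [addrLeft, List.length_cons, pow_succ]
    push_cast
    linear_combination hj

lemma addrLeft_append (α β : Address) :
    addrLeft (α ++ β) = addrLeft α + addrLen α * addrLeft β := by
  induction α with
  | nil => simp [addrLeft, addrLen]
  | cons d α ih =>
    simp only [List.cons_append, addrLeft, ih, addrLen, List.length_cons, pow_succ]
    ring

lemma addrLen_append (α β : Address) : addrLen (α ++ β) = addrLen α * addrLen β := by
  rw [addrLen, addrLen, addrLen, List.length_append, pow_add]

lemma psi_append (α β : Address) (t : ℝ) : psi (α ++ β) t = psi β (psi α t) := by
  unfold psi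
  rw [addrLeft_append, addrLen_append]
  field_simp [(addrLen_pos α).ne', (addrLen_pos β).ne']
  ring

lemma psiInv_append (α β : Address) (t : ℝ) :
    psiInv (α ++ β) t = psiInv α (psiInv β t) := by
  unfold psiInv
  rw [addrLeft_append, addrLen_append]
  ring

lemma mem_Iaddr_append {α β : Address} {t : ℝ} :
    t ∈ Iaddr (α ++ β) ↔ psi α t ∈ Iaddr β := by
  rw [mem_Iaddr_iff, mem_Iaddr_iff, psi_append]

lemma Iaddr_append_subset (α β : Address) : Iaddr (α ++ β) ⊆ Iaddr α := fun _ ht =>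
  mem_Iaddr_iff.2 (Iaddr_subset_Icc β (mem_Iaddr_append.1 ht))

lemma phi_comp (α : Address) (g q : ℝ → ℝ) (hq : MapsTo q (Icc 0 1) (Icc 0 1)) :
    phi α (fun t => g (q t)) = fun t => phi α g (phi α q t) := by
  funext t
  by_cases ht : t ∈ Iaddr α
  · have hq' : psiInv α (q (psi α t)) ∈ Iaddr α := psiInv_mem_Iaddr (hq (mem_Iaddr_iff.1 ht))
    simp only [phi, if_pos ht, if_pos hq', psi_psiInv]
  · simp only [phi, if_neg ht]

lemma phi_append (α β : Address) (g : ℝ → ℝ) : phi α (phi β g) = phi (α ++ β) g := by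
  funext t
  by_cases ht : t ∈ Iaddr α
  · by_cases ht' : psi α t ∈ Iaddr β
    · simp only [phi, if_pos ht, if_pos ht', if_pos (mem_Iaddr_append.2 ht'), psiInv_append,
        psi_append]
    · simp only [phi, if_pos ht, if_neg ht', if_neg (mt mem_Iaddr_append.1 ht'), psiInv_psi]
  · simp only [phi, if_neg ht, if_neg (mt (Iaddr_append_subset α β ·) ht)]

lemma phi_eq_conj {g : ℝ → ℝ} (hg : ∀ t ∉ Icc (0 : ℝ) 1, g t = t) (α : Address) :
    phi α g = fun t => psiInv α (g (psi α t)) := by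
  funext t
  by_cases ht : t ∈ Iaddr α
  · rw [phi, if_pos ht]
  · rw [phi, if_neg ht, hg _ (mt mem_Iaddr_iff.2 ht), psiInv_psi]

lemma phi_nil {g : ℝ → ℝ} (hg : ∀ t ∉ Icc (0 : ℝ) 1, g t = t) : phi [] g = g := by
  funext t
  simp [phi_eq_conj hg, psi_nil, psiInv, addrLeft, addrLen]

lemma phi_apply_of_eqOn_id {g : ℝ → ℝ} (hg : EqOn g id (Icc 0 1)) {α : Address} (t : ℝ) :
    phi α g t = t := by
  by_cases ht : t ∈ Iaddr α
  · rw [phi, if_pos ht, hg (mem_Iaddr_iff.1 ht), id, psiInv_psi]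
  · rw [phi, if_neg ht]


lemma IsTriadic.add {x y : ℝ} (hx : IsTriadic x) (hy : IsTriadic y) : IsTriadic (x + y) := by
  obtain ⟨a, n, rfl⟩ := hx
  obtain ⟨b, m, rfl⟩ := hy
  refine ⟨a * 3 ^ m + b * 3 ^ n, n + m, ?_⟩
  push_cast
  field_simp
  ring

lemma IsTriadic.mul {x y : ℝ} (hx : IsTriadic x) (hy : IsTriadic y) : IsTriadic (x * y) := by
  obtain ⟨a, n, rfl⟩ := hx
  obtain ⟨b, m, rfl⟩ := hy
  exact ⟨a * b, n + m, by push_cast; rw [div_mul_div_comm, pow_add]⟩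

lemma IsTriadic.neg {x : ℝ} (hx : IsTriadic x) : IsTriadic (-x) := by
  obtain ⟨a, n, rfl⟩ := hx
  exact ⟨-a, n, by push_cast; ring⟩

lemma isTriadic_zpow (k : ℤ) : IsTriadic ((3 : ℝ) ^ k) := by
  obtain ⟨n, rfl | rfl⟩ := Int.eq_nat_or_neg k
  · exact ⟨3 ^ n, 0, by simp⟩
  · exact ⟨1, n, by simp [zpow_neg]⟩

lemma isTriadic_addrLeft (α : Address) : IsTriadic (addrLeft α) := by
  obtain ⟨j, hj⟩ := addrLeft_mul_pow α
  exact ⟨j, α.length, by push_cast; rw [← hj]; field_simp⟩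

lemma IsTriadic.eventually_mul_pow_eq_int {x : ℝ} (hx : IsTriadic x) :
    ∀ᶠ n in Filter.atTop, ∃ a : ℤ, x * 3 ^ n = a := by
  obtain ⟨a, m, rfl⟩ := hx
  filter_upwards [Filter.eventually_ge_atTop m] with n hn
  refine ⟨a * 3 ^ (n - m), ?_⟩
  push_cast
  rw [pow_sub₀ _ (by norm_num) hn]
  field_simp

def EventuallyTriadicAffine (l : Filter ℝ) (f : ℝ → ℝ) : Prop :=
  ∃ (k : ℤ) (c : ℝ), IsTriadic c ∧ ∀ᶠ y in l, f y = (3 : ℝ) ^ k * y + c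

namespace EventuallyTriadicAffine

variable {l l' : Filter ℝ} {f p : ℝ → ℝ}

lemma mono (h : EventuallyTriadicAffine l f) (hl : l' ≤ l) : EventuallyTriadicAffine l' f :=
  let ⟨k, c, hc, hf⟩ := h; ⟨k, c, hc, hf.filter_mono hl⟩

lemma congr (h : EventuallyTriadicAffine l f) {g : ℝ → ℝ} (hfg : f =ᶠ[l] g) :
    EventuallyTriadicAffine l g :=
  let ⟨k, c, hc, hf⟩ := h; ⟨k, c, hc, hfg.symm.trans hf⟩

lemma of_id : EventuallyTriadicAffine l id :=
  ⟨0, 0, ⟨0, 0, by simp⟩, Filter.Eventually.of_forall fun y => by simp⟩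

lemma comp (hf : EventuallyTriadicAffine l' f) (hp : EventuallyTriadicAffine l p)
    (hpl : Filter.Tendsto p l l') : EventuallyTriadicAffine l (fun y => f (p y)) := by
  obtain ⟨k, c, hc, hf⟩ := hf
  obtain ⟨k', c', hc', hp⟩ := hp
  refine ⟨k + k', 3 ^ k * c' + c, ((isTriadic_zpow k).mul hc').add hc, ?_⟩
  filter_upwards [hp, hpl.eventually hf] with y hpy hfy
  rw [hfy, hpy, zpow_add₀ (by norm_num)]
  ring

lemma continuousAt {x : ℝ} (h : EventuallyTriadicAffine (𝓝 x) f) : ContinuousAt f x := by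
  obtain ⟨k, c, -, hf⟩ := h
  have hcont : Continuous fun y : ℝ => (3 : ℝ) ^ k * y + c := by fun_prop
  exact hcont.continuousAt.congr (Filter.EventuallyEq.symm hf)

lemma isTriadic_of_isTriadic_apply {x : ℝ} (h : EventuallyTriadicAffine (𝓝 x) f)
    (hfx : IsTriadic (f x)) : IsTriadic x := by
  obtain ⟨k, c, hc, hf⟩ := h
  have hx : x = 3 ^ (-k) * f x + 3 ^ (-k) * -c := by
    rw [hf.self_of_nhds, zpow_neg]
    field_simp
    ring
  rw [hx]
  exact ((isTriadic_zpow _).mul hfx).add ((isTriadic_zpow _).mul hc.neg)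

end EventuallyTriadicAffine

lemma eventuallyTriadicAffine_psi (α : Address) (l : Filter ℝ) :
    EventuallyTriadicAffine l (psi α) := by
  refine ⟨α.length, -(addrLeft α * 3 ^ α.length),
    ((isTriadic_addrLeft α).mul (isTriadic_zpow α.length)).neg, .of_forall fun y => ?_⟩
  rw [psi, addrLen_eq_zpow, zpow_neg, zpow_natCast]
  field_simp
  ring

lemma eventuallyTriadicAffine_psiInv (α : Address) (l : Filter ℝ) :
    EventuallyTriadicAffine l (psiInv α) :=
  ⟨-(α.length : ℤ), addrLeft α, isTriadic_addrLeft α,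
    .of_forall fun y => by rw [psiInv, addrLen_eq_zpow]; ring⟩

-- The breakpoint condition of `IsF3`, with neighbourhoods taken in `ℝ` rather than in `[0, 1]`:
-- in this form it is stable under composition.
def HasTriadicBreaks (f : ℝ → ℝ) : Prop :=
  ∃ B : Finset ℝ, (∀ b ∈ B, IsTriadic b) ∧ ∀ x ∉ B, EventuallyTriadicAffine (𝓝 x) f

lemma HasTriadicBreaks.comp {f p : ℝ → ℝ} (hf : HasTriadicBreaks f) (hp : HasTriadicBreaks p)
    (hinj : Function.Injective p) : HasTriadicBreaks (fun t => f (p t)) := by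
  obtain ⟨Bf, hBf, hf⟩ := hf
  obtain ⟨Bp, hBp, hp⟩ := hp
  refine ⟨Bp ∪ Bf.preimage p hinj.injOn, fun b hb => ?_, fun x hx => ?_⟩
  · by_cases hbp : b ∈ Bp
    · exact hBp b hbp
    · have hpb : p b ∈ Bf := Finset.mem_preimage.1 ((Finset.mem_union.1 hb).resolve_left hbp)
      exact (hp b hbp).isTriadic_of_isTriadic_apply (hBf _ hpb)
  · simp only [Finset.mem_union, Finset.mem_preimage, not_or] at hx
    exact (hf _ hx.2).comp (hp x hx.1) (hp x hx.1).continuousAt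

lemma hasTriadicBreaks_of_forall {f : ℝ → ℝ} (h : ∀ x, EventuallyTriadicAffine (𝓝 x) f) :
    HasTriadicBreaks f :=
  ⟨∅, by simp, fun x _ => h x⟩

lemma IsF3.strictMono {f : ℝ → ℝ} (hf : IsF3 f) : StrictMono f := by
  obtain ⟨hout, ⟨hmaps, -⟩, hmono, -⟩ := hf
  intro a b hab
  by_cases ha : a ∈ Icc (0 : ℝ) 1 <;> by_cases hb : b ∈ Icc (0 : ℝ) 1
  · exact hmono ha hb hab
  · rw [hout b hb]
    exact (hmaps ha).2.trans_lt (lt_of_not_ge fun h => hb ⟨ha.1.trans hab.le, h⟩)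
  · rw [hout a ha]
    exact (lt_of_not_ge fun h => ha ⟨h, hab.le.trans hb.2⟩).trans_le (hmaps hb).1
  · rwa [hout a ha, hout b hb]

lemma IsF3.surjective {f : ℝ → ℝ} (hf : IsF3 f) : Function.Surjective f := fun y => by
  by_cases hy : y ∈ Icc (0 : ℝ) 1
  · obtain ⟨x, -, hx⟩ := hf.2.1.2.2 hy
    exact ⟨x, hx⟩
  · exact ⟨y, hf.1 y hy⟩

lemma IsF3.hasTriadicBreaks {f : ℝ → ℝ} (hf : IsF3 f) : HasTriadicBreaks f := by
  obtain ⟨hout, -, -, B, hB, hloc⟩ := hf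
  refine ⟨insert 0 (insert 1 B), ?_, fun x hx => ?_⟩
  · simp only [Finset.mem_insert, forall_eq_or_imp]
    exact ⟨⟨0, 0, by simp⟩, ⟨1, 0, by simp⟩, hB⟩
  simp only [Finset.mem_insert, not_or] at hx
  obtain ⟨hx0, hx1, hxB⟩ := hx
  by_cases hxI : x ∈ Icc (0 : ℝ) 1
  · have hI : Icc (0 : ℝ) 1 ∈ 𝓝 x :=
      Icc_mem_nhds (lt_of_le_of_ne hxI.1 (Ne.symm hx0)) (lt_of_le_of_ne hxI.2 hx1)
    rw [← nhdsWithin_eq_nhds.2 hI]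
    exact hloc x hxI hxB
  · refine EventuallyTriadicAffine.of_id.congr ?_
    filter_upwards [isClosed_Icc.isOpen_compl.mem_nhds hxI] with y hy
    exact (hout y hy).symm

lemma isF3_of_strictMono {f : ℝ → ℝ} (hmono : StrictMono f) (hsurj : Function.Surjective f)
    (hout : ∀ t ∉ Icc (0 : ℝ) 1, f t = t) (hbr : HasTriadicBreaks f) : IsF3 f := by
  obtain ⟨B, hB, hloc⟩ := hbr
  have hmaps : MapsTo f (Icc 0 1) (Icc 0 1) := fun t ht => by
    by_contra h
    rw [hmono.injective (hout _ h)] at h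
    exact h ht
  refine ⟨hout, ⟨hmaps, hmono.injective.injOn, fun y hy => ?_⟩, hmono.strictMonoOn _, B, hB,
    fun x _ hx => (hloc x hx).mono nhdsWithin_le_nhds⟩
  obtain ⟨x, rfl⟩ := hsurj y
  by_cases hx : x ∈ Icc (0 : ℝ) 1
  · exact ⟨x, hx, rfl⟩
  · exact absurd (hout x hx ▸ hy) hx

lemma IsF3.mapsTo {f : ℝ → ℝ} (hf : IsF3 f) : MapsTo f (Icc 0 1) (Icc 0 1) := hf.2.1.1

lemma IsF3.map_zero {f : ℝ → ℝ} (hf : IsF3 f) : f 0 = 0 := by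
  obtain ⟨s, hs, hfs⟩ := hf.2.1.2.2 (left_mem_Icc.2 zero_le_one)
  exact le_antisymm ((hf.2.2.1.monotoneOn (left_mem_Icc.2 zero_le_one) hs hs.1).trans hfs.le)
    (hf.mapsTo (left_mem_Icc.2 zero_le_one)).1

lemma IsF3.map_one {f : ℝ → ℝ} (hf : IsF3 f) : f 1 = 1 := by
  obtain ⟨s, hs, hfs⟩ := hf.2.1.2.2 (right_mem_Icc.2 zero_le_one)
  exact le_antisymm (hf.mapsTo (right_mem_Icc.2 zero_le_one)).2
    (hfs.symm.le.trans (hf.2.2.1.monotoneOn hs (right_mem_Icc.2 zero_le_one) hs.2))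

lemma IsF3.comp {f p : ℝ → ℝ} (hf : IsF3 f) (hp : IsF3 p) : IsF3 (fun t => f (p t)) :=
  isF3_of_strictMono (hf.strictMono.comp hp.strictMono) (hf.surjective.comp hp.surjective)
    (fun t ht => by rw [hp.1 t ht, hf.1 t ht])
    (hf.hasTriadicBreaks.comp hp.hasTriadicBreaks hp.strictMono.injective)

lemma isF3_phi {g : ℝ → ℝ} (hg : IsF3 g) (α : Address) : IsF3 (phi α g) := by
  have hmono : StrictMono fun t => g (psi α t) := hg.strictMono.comp (strictMono_psi α)
  have hbr : HasTriadicBreaks fun t => g (psi α t) :=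
    hg.hasTriadicBreaks.comp (hasTriadicBreaks_of_forall fun _ => eventuallyTriadicAffine_psi α _)
      (strictMono_psi α).injective
  rw [phi_eq_conj hg.1]
  refine isF3_of_strictMono ((strictMono_psiInv α).comp hmono)
    ((Function.LeftInverse.surjective (psiInv_psi α)).comp
      (hg.surjective.comp (Function.LeftInverse.surjective (psi_psiInv α)))) (fun t ht => ?_)
    ((hasTriadicBreaks_of_forall fun _ => eventuallyTriadicAffine_psiInv α _).comp hbr
      hmono.injective)
  have hψ : psi α t ∉ Icc (0 : ℝ) 1 := fun h => ht (Iaddr_subset_Icc α (mem_Iaddr_iff.2 h))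
  rw [hg.1 _ hψ, psiInv_psi]

lemma addrLen_mul_pow (α : Address) : addrLen α * 3 ^ α.length = 1 := by
  rw [addrLen, ← mul_pow]; norm_num

lemma notMem_Ioo_of_mul_pow_eq_int {α : Address} {b : ℝ} {a : ℤ} (hb : b * 3 ^ α.length = a) :
    b ∉ Ioo (addrLeft α) (addrLeft α + addrLen α) := by
  rintro ⟨h₁, h₂⟩
  obtain ⟨j, hj⟩ := addrLeft_mul_pow α
  have hpos : (0 : ℝ) < 3 ^ α.length := by positivity
  have hja : (j : ℝ) < a := by
    rw [← hj, ← hb]; exact mul_lt_mul_of_pos_right h₁ hpos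
  have haj : (a : ℝ) < j + 1 := by
    rw [← hj, ← hb, ← addrLen_mul_pow α, ← add_mul]; exact mul_lt_mul_of_pos_right h₂ hpos
  have : (j : ℤ) < a := by exact_mod_cast hja
  have : a < (j : ℤ) + 1 := by exact_mod_cast haj
  omega

lemma eq_and_eq_of_eventuallyEq_affine {x A B A' B' : ℝ}
    (h : (fun y => A * y + B) =ᶠ[𝓝 x] fun y => A' * y + B') : A = A' ∧ B = B' := by
  have hA : A = A' := by simpa using h.deriv_eq
  have hx := h.eq_of_nhds
  subst hA
  exact ⟨rfl, by simpa using hx⟩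

lemma IsPreconnected.eqOn_affine_of_locally {s : Set ℝ} (hs : IsPreconnected s) {f : ℝ → ℝ}
    (hloc : ∀ x ∈ s, ∃ A B : ℝ, ∀ᶠ y in 𝓝 x, f y = A * y + B) {x₀ A B : ℝ} (hx₀ : x₀ ∈ s)
    (h₀ : ∀ᶠ y in 𝓝 x₀, f y = A * y + B) : ∀ y ∈ s, f y = A * y + B := by
  -- "same affine germ" is an equivalence relation with open classes
  let P : ℝ → ℝ → Prop := fun x y => ∀ A B : ℝ,
    (∀ᶠ z in 𝓝 x, f z = A * z + B) ↔ ∀ᶠ z in 𝓝 y, f z = A * z + B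
  have hP : ∀ x ∈ s, ∀ᶠ y in 𝓝[s] x, P x y := by
    intro x hx
    obtain ⟨A₁, B₁, h₁⟩ := hloc x hx
    have germ : ∀ z, (∀ᶠ w in 𝓝 z, f w = A₁ * w + B₁) →
        ∀ A B : ℝ, (∀ᶠ w in 𝓝 z, f w = A * w + B) ↔ A = A₁ ∧ B = B₁ := by
      refine fun z hz A B => ⟨fun h => eq_and_eq_of_eventuallyEq_affine (x := z) ?_, ?_⟩
      · filter_upwards [h, hz] with w hw hw₁
        rw [← hw, ← hw₁]
      · rintro ⟨rfl, rfl⟩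
        exact hz
    filter_upwards [nhdsWithin_le_nhds h₁.eventually_nhds] with y hy A B
    rw [germ x h₁, germ y hy]
  intro y hy
  refine ((hs.induction₂ P hP (fun x y z _ _ _ hxy hyz A B => (hxy A B).trans (hyz A B))
    (fun x y _ _ hxy A B => (hxy A B).symm) hx₀ hy A B).1 h₀).self_of_nhds

lemma IsF3.continuous {f : ℝ → ℝ} (hf : IsF3 f) : Continuous f :=
  hf.strictMono.monotone.continuous_of_surjective hf.surjective

theorem IsF3.exists_affine_on_Iaddr {f : ℝ → ℝ} (hf : IsF3 f) :
    ∃ K : ℕ, ∀ α : Address, K ≤ α.length →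
      ∃ (k : ℤ) (c : ℝ), IsTriadic c ∧ ∀ t ∈ Iaddr α, f t = (3 : ℝ) ^ k * t + c := by
  obtain ⟨B, hB, hloc⟩ := hf.hasTriadicBreaks
  obtain ⟨K, hK⟩ := Filter.eventually_atTop.1 ((Filter.eventually_all_finset B).2
    fun b hb => (hB b hb).eventually_mul_pow_eq_int)
  refine ⟨K, fun α hα => ?_⟩
  set u := addrLeft α
  set v := addrLeft α + addrLen α
  have huv : u < v := lt_add_of_pos_right _ (addrLen_pos α)
  have hfree : ∀ x ∈ Ioo u v, x ∉ B := fun x hx hxB =>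
    let ⟨_, ha⟩ := hK α.length hα x hxB
    notMem_Ioo_of_mul_pow_eq_int ha hx
  have hmid : (u + v) / 2 ∈ Ioo u v := ⟨left_lt_add_div_two.2 huv, add_div_two_lt_right.2 huv⟩
  obtain ⟨k, c, hc, h₀⟩ := hloc _ (hfree _ hmid)
  have hIoo := isPreconnected_Ioo.eqOn_affine_of_locally
    (fun x hx => let ⟨_, _, _, h⟩ := hloc x (hfree x hx); ⟨_, _, h⟩) hmid h₀
  exact ⟨k, c, hc, Set.EqOn.of_subset_closure hIoo hf.continuous.continuousOn (by fun_prop)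
    Ioo_subset_Icc_self (closure_Ioo huv.ne).ge⟩

lemma exists_addr_of_lt : ∀ (l j : ℕ), j < 3 ^ l →
    ∃ β : Address, β.length = l ∧ addrLeft β = j / 3 ^ l
  | 0, j, hj => ⟨[], rfl, by simp [addrLeft, Nat.lt_one_iff.1 (by simpa using hj)]⟩
  | l + 1, j, hj => by
    obtain ⟨β, hβ, hβj⟩ := exists_addr_of_lt l (j / 3)
      (Nat.div_lt_of_lt_mul (by rwa [pow_succ, mul_comm] at hj))
    refine ⟨β ++ [⟨j % 3, Nat.mod_lt _ (by norm_num)⟩], by simp [hβ], ?_⟩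
    have hj3 : (j : ℝ) = 3 * (j / 3 : ℕ) + (j % 3 : ℕ) := by
      exact_mod_cast (Nat.div_add_mod j 3).symm
    rw [addrLeft_append, hβj, addrLen, hβ, hj3, one_div, inv_pow]
    simp only [addrLeft]
    field_simp
    ring

lemma exists_addr_of_mul_pow_eq_int {x : ℝ} {l : ℕ} {N : ℤ} (hN : x * 3 ^ l = N)
    (h0 : 0 ≤ x) (h1 : x + (1 / 3) ^ l ≤ 1) : ∃ β : Address, β.length = l ∧ addrLeft β = x := by
  have h3 : (0 : ℝ) < 3 ^ l := by positivity
  obtain ⟨n, rfl⟩ := Int.eq_ofNat_of_zero_le (show (0 : ℤ) ≤ N by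
    exact_mod_cast hN ▸ mul_nonneg h0 h3.le)
  have hn : (n : ℝ) + 1 ≤ 3 ^ l := by
    have h := mul_le_mul_of_nonneg_right h1 h3.le
    rwa [add_mul, hN, ← mul_pow, one_div, inv_mul_cancel₀ three_ne_zero, one_pow, one_mul] at h
  obtain ⟨β, hβ, hβn⟩ :=
    exists_addr_of_lt l n (by exact_mod_cast (show (n : ℝ) < 3 ^ l by linarith))
  exact ⟨β, hβ, by rw [hβn, div_eq_iff h3.ne', hN]; rfl⟩

lemma exists_isTriadicLinearOn_of_affine {f : ℝ → ℝ} {α : Address} {k : ℤ} {c : ℝ} {l : ℕ}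
    (hl : (l : ℤ) + k = α.length) (hc : ∃ a : ℤ, c * 3 ^ l = a)
    (hf : ∀ t ∈ Iaddr α, f t = (3 : ℝ) ^ k * t + c) (hmaps : MapsTo f (Iaddr α) (Icc 0 1)) :
    ∃ β, IsTriadicLinearOn f α β := by
  obtain ⟨a, ha⟩ := hc
  obtain ⟨j, hj⟩ := addrLeft_mul_pow α
  have hk : (3 : ℝ) ^ k * 3 ^ l = 3 ^ α.length := by
    rw [← zpow_natCast, ← zpow_natCast, ← zpow_add₀ three_ne_zero]
    congr 1
    omega
  have hslope : 3 ^ k * addrLen α = (1 / 3 : ℝ) ^ l := by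
    rw [addrLen_eq_zpow, one_div, inv_pow, ← zpow_natCast, ← zpow_neg, ← zpow_add₀ three_ne_zero]
    congr 1
    omega
  have hu : addrLeft α ∈ Iaddr α := ⟨le_rfl, le_add_of_nonneg_right (addrLen_pos α).le⟩
  have hv : addrLeft α + addrLen α ∈ Iaddr α :=
    ⟨le_add_of_nonneg_right (addrLen_pos α).le, le_rfl⟩
  have hfu : f (addrLeft α) * 3 ^ l = ((j + a : ℤ) : ℝ) := by
    rw [hf _ hu]
    push_cast
    linear_combination addrLeft α * hk + hj + ha
  have hfv : f (addrLeft α + addrLen α) = f (addrLeft α) + (1 / 3) ^ l := by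
    rw [hf _ hv, hf _ hu, ← hslope]
    ring
  obtain ⟨β, hβ, hβu⟩ := exists_addr_of_mul_pow_eq_int hfu (hmaps hu).1 (hfv ▸ (hmaps hv).2)
  refine ⟨β, fun t ht => ?_⟩
  rw [psiInv, psi, hβu, addrLen, hβ, ← hslope, hf _ ht, hf _ hu]
  field_simp [(addrLen_pos α).ne']
  ring

theorem IsF3.exists_isTriadicLinearOn_replicate {f : ℝ → ℝ} (hf : IsF3 f) (i : Fin 3) :
    ∃ n β, IsTriadicLinearOn f (List.replicate n i) β := by
  obtain ⟨K, hK⟩ := hf.exists_affine_on_Iaddr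
  obtain ⟨k, c, hc, hkc⟩ := hK (List.replicate K i) (by simp)
  obtain ⟨m, hm⟩ := Filter.eventually_atTop.1 hc.eventually_mul_pow_eq_int
  -- pass to a deeper level `n = l + k ≥ K` at which the image interval has level `l ≥ m`
  set l := m + (K - k).toNat
  set n := (l + k).toNat
  have hn : (l : ℤ) + k = n := (Int.toNat_of_nonneg (by omega)).symm
  have hsub : Iaddr (List.replicate n i) ⊆ Iaddr (List.replicate K i) := by
    rw [show n = K + (n - K) by omega, List.replicate_add]
    exact Iaddr_append_subset _ _
  exact ⟨n, exists_isTriadicLinearOn_of_affine (by simpa using hn) (hm l (by omega))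
    (fun t ht => hkc t (hsub ht)) fun t ht => hf.mapsTo (Iaddr_subset_Icc _ ht)⟩

lemma psi_singleton (d : Fin 3) (t : ℝ) : psi [d] t = 3 * t - ((d : ℕ) : ℝ) := by
  simp only [psi, addrLeft, addrLen, List.length_singleton]
  field_simp
  ring

lemma prefix_of_Iaddr_subset : ∀ {α β : Address}, Iaddr β ⊆ Iaddr α → α <+: β
  | [], _, _ => List.nil_prefix
  | d :: α, [], h => by
    rw [Iaddr_nil] at h
    have h0 := h (left_mem_Icc.2 zero_le_one)
    have h1 := h (right_mem_Icc.2 zero_le_one)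
    have hlen : addrLen (d :: α) < 1 := pow_lt_one₀ (by norm_num) (by norm_num) (by simp)
    linarith [h0.1, h1.2]
  | d :: α, e :: β, h => by
    -- the midpoint `m` of `I_{e :: β}` lies in `I_[d]` and in the interior of `I_[e]`
    set m := psiInv (e :: β) (1 / 2)
    have hx : psi [d] m ∈ Icc (0 : ℝ) 1 :=
      mem_Iaddr_iff.1 (Iaddr_append_subset [d] α (h (psiInv_mem_Iaddr (by norm_num))))
    have hy : psi [e] m ∈ Ioo (0 : ℝ) 1 := by
      rw [show m = psiInv [e] (psiInv β (1 / 2)) from psiInv_append [e] β _, psi_psiInv, psiInv]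
      constructor <;> nlinarith [addrLeft_nonneg β, addrLeft_add_addrLen_le_one β, addrLen_pos β]
    rw [psi_singleton] at hx hy
    have hde : d = e := by
      have h₁ : (d : ℕ) < e + 1 := by
        exact_mod_cast (show ((d : ℕ) : ℝ) < e + 1 by linarith [hx.1, hy.2])
      have h₂ : (e : ℕ) < d + 1 := by
        exact_mod_cast (show ((e : ℕ) : ℝ) < d + 1 by linarith [hx.2, hy.1])
      exact Fin.ext (by omega)
    subst hde
    refine List.cons_prefix_cons.2 ⟨rfl, prefix_of_Iaddr_subset fun t ht => ?_⟩
    have ht' : psiInv [d] t ∈ Iaddr ([d] ++ β) := by rwa [mem_Iaddr_append, psi_psiInv]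
    simpa only [psi_psiInv] using (mem_Iaddr_append (α := [d])).1 (h ht')

namespace IsTriadicLinearOn

variable {f g : ℝ → ℝ} {α δ βf β γ : Address}

lemma append (h : IsTriadicLinearOn f α β) (δ : Address) :
    IsTriadicLinearOn f (α ++ δ) (β ++ δ) := fun t ht => by
  rw [h t (Iaddr_append_subset α δ ht), psiInv_append, psi_append, psiInv_psi]

lemma comp_phi (hf : IsTriadicLinearOn f α βf) (hg : IsTriadicLinearOn g δ γ) :
    IsTriadicLinearOn (fun t => f (phi α g t)) (α ++ δ) (βf ++ γ) := fun t ht => by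
  have hδ : psi α t ∈ Iaddr δ := mem_Iaddr_append.1 ht
  have hgt : g (psi α t) ∈ Icc (0 : ℝ) 1 :=
    hg _ hδ ▸ Iaddr_subset_Icc γ (psiInv_mem_Iaddr (mem_Iaddr_iff.1 hδ))
  simp only [phi, if_pos (Iaddr_append_subset α δ ht)]
  rw [hf _ (psiInv_mem_Iaddr hgt), psi_psiInv, hg _ hδ, psiInv_append, psi_append]

lemma of_comp_phi (hf : IsTriadicLinearOn f α βf) (hg : MapsTo g (Icc 0 1) (Icc 0 1))
    (h : IsTriadicLinearOn (fun t => f (phi α g t)) (α ++ δ) β) :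
    ∃ γ, IsTriadicLinearOn g δ γ := by
  have hgδ : ∀ r ∈ Iaddr δ, g r = psi βf (psiInv β (psi δ r)) := by
    intro r hr
    have ht : psiInv α r ∈ Iaddr (α ++ δ) := by rwa [mem_Iaddr_append, psi_psiInv]
    have hr' := h _ ht
    simp only [phi, if_pos (Iaddr_append_subset α δ ht), psi_psiInv, psi_append] at hr'
    rw [hf _ (psiInv_mem_Iaddr (hg (Iaddr_subset_Icc δ hr))), psi_psiInv] at hr'
    rw [← hr', psi_psiInv]
  -- as `g` maps `[0, 1]` into itself, `I_β ⊆ I_βf`, that is, `β = βf ++ γ`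
  obtain ⟨γ, rfl⟩ := prefix_of_Iaddr_subset (α := βf) (β := β) fun s hs => by
    have hr : psiInv δ (psi β s) ∈ Iaddr δ := psiInv_mem_Iaddr (mem_Iaddr_iff.1 hs)
    have hgs : g (psiInv δ (psi β s)) = psi βf s := by rw [hgδ _ hr, psi_psiInv, psiInv_psi]
    exact mem_Iaddr_iff.2 (hgs ▸ hg (Iaddr_subset_Icc δ hr))
  exact ⟨γ, fun r hr => by rw [hgδ r hr, psiInv_append, psi_psiInv]⟩

lemma eqOn_id_of_nil (h : IsTriadicLinearOn g [] γ) (h0 : g 0 = 0) (h1 : g 1 = 1) :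
    EqOn g id (Icc 0 1) := by
  have hlin : ∀ s ∈ Icc (0 : ℝ) 1, g s = addrLeft γ + addrLen γ * s := fun s hs => by
    rw [h s (Iaddr_nil ▸ hs), psi_nil, psiInv]
  have ha : addrLeft γ = 0 := by simpa [h0] using (hlin 0 (left_mem_Icc.2 zero_le_one)).symm
  have hl : addrLen γ = 1 := by simpa [h1, ha] using (hlin 1 (right_mem_Icc.2 zero_le_one)).symm
  intro t ht
  rw [hlin t ht, ha, hl, id]
  ring

end IsTriadicLinearOn

lemma leafExp_le {i : Fin 3} {f : ℝ → ℝ} {n : ℕ} {β : Address}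
    (h : IsTriadicLinearOn f (List.replicate n i) β) : leafExp i f ≤ n :=
  Nat.sInf_le ⟨β, h⟩

lemma IsF3.exists_isTriadicLinearOn_leafExp {f : ℝ → ℝ} (hf : IsF3 f) (i : Fin 3) :
    ∃ β, IsTriadicLinearOn f (List.replicate (leafExp i f) i) β :=
  Nat.sInf_mem (hf.exists_isTriadicLinearOn_replicate i)

lemma leafExp_id (i : Fin 3) : leafExp i (fun t => t) = 0 :=
  Nat.eq_zero_of_le_zero (leafExp_le (β := []) fun t _ => (psiInv_psi [] t).symm)

lemma isF3_diamI (i : Fin 3) {f g : ℝ → ℝ} (hf : IsF3 f) (hg : IsF3 g) : IsF3 (diamI i f g) :=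
  hf.comp (isF3_phi hg _)

theorem leafExp_diamI (i : Fin 3) {f g : ℝ → ℝ} (hf : IsF3 f) (hg : IsF3 g) :
    leafExp i (diamI i f g) = leafExp i f + leafExp i g := by
  obtain ⟨βf, hβf⟩ := hf.exists_isTriadicLinearOn_leafExp i
  obtain ⟨βg, hβg⟩ := hg.exists_isTriadicLinearOn_leafExp i
  obtain ⟨β, hβ⟩ := (isF3_diamI i hf hg).exists_isTriadicLinearOn_leafExp i
  have hle : leafExp i (diamI i f g) ≤ leafExp i f + leafExp i g :=
    leafExp_le (by rw [List.replicate_add]; exact hβf.comp_phi hβg)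
  rcases le_or_gt (leafExp i f) (leafExp i (diamI i f g)) with hfF | hFf
  · obtain ⟨d, hd⟩ := Nat.exists_eq_add_of_le hfF
    rw [hd, List.replicate_add] at hβ
    obtain ⟨γ, hγ⟩ := hβf.of_comp_phi hg.mapsTo hβ
    have := leafExp_le hγ
    omega
  · -- then `g` is triadic linear on all of `[0, 1]`, i.e. the identity, so `f ⋄ᵢ g = f`
    have hβ' := hβ.append (List.replicate (leafExp i f - leafExp i (diamI i f g)) i)
    rw [← List.replicate_add, Nat.add_sub_cancel' hFf.le,
      ← List.append_nil (List.replicate (leafExp i f) i)] at hβ'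
    obtain ⟨γ, hγ⟩ := hβf.of_comp_phi hg.mapsTo hβ'
    have hfg : diamI i f g = f := by
      funext t
      rw [diamI, phi_apply_of_eqOn_id (hγ.eqOn_id_of_nil hg.map_zero hg.map_one)]
    rw [hfg] at hFf
    exact (lt_irrefl _ hFf).elim

lemma diamI_id_right (i : Fin 3) (f : ℝ → ℝ) : diamI i f (fun t => t) = f := by
  funext t
  rw [diamI, phi_apply_of_eqOn_id (g := fun t => t) (fun _ _ => rfl)]

lemma id_diamI (i : Fin 3) {f : ℝ → ℝ} (hf : IsF3 f) : diamI i (fun t => t) f = f := by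
  funext t
  rw [diamI, leafExp_id, List.replicate_zero, phi_nil hf.1]

lemma diamI_assoc (i : Fin 3) {f g h : ℝ → ℝ} (hf : IsF3 f) (hg : IsF3 g) (hh : IsF3 h) :
    diamI i (diamI i f g) h = diamI i f (diamI i g h) := by
  have hm := leafExp_diamI i hf hg
  unfold diamI at hm ⊢
  rw [hm, List.replicate_add, ← phi_append, phi_comp _ _ _ (isF3_phi hh _).mapsTo]

/-- for each `i ∈ {0,1,2}`, `⋄_i` makes `F₃` a monoid with identity
the identity element of `F₃`. -/
theorem diamI_monoid (i : Fin 3) :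
    (∀ f g : ℝ → ℝ, IsF3 f → IsF3 g → IsF3 (diamI i f g)) ∧
    (∀ f : ℝ → ℝ, IsF3 f → diamI i f (fun t => t) = f ∧ diamI i (fun t => t) f = f) ∧
    (∀ f g h : ℝ → ℝ, IsF3 f → IsF3 g → IsF3 h →
      diamI i (diamI i f g) h = diamI i f (diamI i g h)) :=
  ⟨fun _ _ hf hg => isF3_diamI i hf hg, fun f hf => ⟨diamI_id_right i f, id_diamI i hf⟩,
    fun _ _ _ hf hg hh => diamI_assoc i hf hg hh⟩
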